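/- arXiv:2212.13624 — 6 statements merged into one kernel-verified Lean document; each statement's English description precedes it below -/
import Mathlib

section
/- Let x_1,...,x_n be distinct elements of a field F, with n ≥ 2. Then for any non-negative integer d, the sum over i = 1,...,n of x_i^d / ∏_{j ≠ i} (x_i - x_j) equals the complete homogeneous symmetric polynomial h_{d-n+1}(x_1,...,x_n), i.e., the sum of all monomials x_1^{λ_1}···x_n^{λ_n} over non-negative integers λ_1 + ... + λ_n = d - n + 1 (an empty sum when d < n-1). -/
open Finset

/-- Complete homogeneous symmetric polynomial of degree `k` (an integer, with
`hpoly n k x = 0` for `k < 0`) evaluated at `x : Fin n → F`. -/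
def hpoly {F : Type*} [CommRing F] (n : ℕ) (k : ℤ) (x : Fin n → F) : F :=
  if 0 ≤ k then ∑ lam ∈ Finset.Nat.antidiagonalTuple n k.toNat, ∏ i, x i ^ lam i else 0

/-- Elementary symmetric polynomial of degree `k` evaluated at `x : Fin n → F`. -/
def epoly {F : Type*} [CommRing F] (n k : ℕ) (x : Fin n → F) : F :=
  ∑ s ∈ (Finset.univ : Finset (Fin n)).powersetCard k, ∏ i ∈ s, x i

/-- The weighted power sum `S_d(x_1,…,x_n)`. -/
def Sfun {F : Type*} [Field F] {n : ℕ} (x : Fin n → F) (d : ℕ) : F :=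
  ∑ i, x i ^ d / ∏ j ∈ Finset.univ.erase i, (x i - x j)

lemma hpoly_ofNat {F : Type*} [CommRing F] (n m : ℕ) (x : Fin n → F) :
    hpoly n (m : ℤ) x = ∑ lam ∈ Finset.Nat.antidiagonalTuple n m, ∏ i, x i ^ lam i := by
  simp [hpoly]

lemma hpoly_neg {F : Type*} [CommRing F] (n : ℕ) {k : ℤ} (hk : k < 0) (x : Fin n → F) :
    hpoly n k x = 0 := by
  simp [hpoly, not_le.2 hk]

lemma hpoly_zero {F : Type*} [CommRing F] (n : ℕ) (x : Fin n → F) :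
    hpoly n 0 x = 1 := by
  have : ((0:ℕ) : ℤ) = 0 := rfl
  rw [← this, hpoly_ofNat, Finset.Nat.antidiagonalTuple_zero_right]
  simp

-- product expansion
lemma prod_sub_expand {F : Type*} [CommRing F] {ι : Type*} [DecidableEq ι] (s : Finset ι)
    (x : ι → F) (y : F) :
    ∏ j ∈ s, (y - x j)
      = ∑ t ∈ s.powerset, (-1) ^ t.card * (∏ i ∈ t, x i) * y ^ (s.card - t.card) := by
  have h : ∀ j, y - x j = (-x j) + y := fun j => by ring
  rw [Finset.prod_congr rfl (fun j _ => h j), Finset.prod_add]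
  refine Finset.sum_congr rfl fun t ht => ?_
  rw [Finset.prod_const, Finset.card_sdiff_of_subset (Finset.mem_powerset.1 ht)]
  have : ∏ i ∈ t, -x i = (-1) ^ t.card * ∏ i ∈ t, x i := by
    rw [← Finset.prod_const (-1 : F), ← Finset.prod_mul_distrib]
    exact Finset.prod_congr rfl fun i _ => by ring
  rw [this]


lemma key_S {F : Type*} [Field F] {n : ℕ} (x : Fin n → F) (d : ℕ) (hd : n ≤ d) :
    ∑ t ∈ (univ : Finset (Fin n)).powerset,
      (-1) ^ t.card * (∏ i ∈ t, x i) * Sfun x (d - t.card) = 0 := by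
  simp only [Sfun, Finset.mul_sum]
  rw [Finset.sum_comm]
  refine Finset.sum_eq_zero fun i _ => ?_
  have hz : ∏ j ∈ (univ : Finset (Fin n)), (x i - x j) = 0 :=
    Finset.prod_eq_zero (Finset.mem_univ i) (by ring)
  have key : ∑ t ∈ (univ : Finset (Fin n)).powerset,
      (-1) ^ t.card * (∏ j ∈ t, x j) * x i ^ (d - t.card) = 0 := by
    have : ∀ t ∈ (univ : Finset (Fin n)).powerset,
        (-1 : F) ^ t.card * (∏ j ∈ t, x j) * x i ^ (d - t.card)
          = x i ^ (d - n) * ((-1) ^ t.card * (∏ j ∈ t, x j) * x i ^ (n - t.card)) := by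
      intro t ht
      have hc : t.card ≤ n := by
        simpa using Finset.card_le_card (Finset.mem_powerset.1 ht)
      have : d - t.card = (d - n) + (n - t.card) := by omega
      rw [this, pow_add]; ring
    rw [Finset.sum_congr rfl this, ← Finset.mul_sum]
    have := prod_sub_expand (univ : Finset (Fin n)) x (x i)
    rw [Finset.card_univ, Fintype.card_fin] at this
    rw [← this, hz, mul_zero]
  calc ∑ t ∈ (univ : Finset (Fin n)).powerset,
        (-1) ^ t.card * (∏ j ∈ t, x j) * (x i ^ (d - t.card) / ∏ j ∈ univ.erase i, (x i - x j))
      = (∑ t ∈ (univ : Finset (Fin n)).powerset,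
        (-1) ^ t.card * (∏ j ∈ t, x j) * x i ^ (d - t.card)) / ∏ j ∈ univ.erase i, (x i - x j) := by
        rw [Finset.sum_div]
        exact Finset.sum_congr rfl fun t _ => by ring
    _ = 0 := by rw [key, zero_div]

open Polynomial in
lemma coeff_basis_univ {F : Type*} [Field F] {n : ℕ} (x : Fin n → F) (i : Fin n) :
    (Lagrange.basis univ x i).coeff (n - 1)
      = (∏ j ∈ univ.erase i, (x i - x j))⁻¹ := by
  unfold Lagrange.basis Lagrange.basisDivisor
  have hC : ∏ j ∈ univ.erase i, (C (x i - x j)⁻¹ : F[X])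
      = C (∏ j ∈ univ.erase i, (x i - x j)⁻¹) := by
    rw [map_prod]
  rw [Finset.prod_mul_distrib, hC, Polynomial.coeff_C_mul]
  have hmonic : (∏ j ∈ univ.erase i, (X - C (x j))).Monic :=
    monic_prod_of_monic _ _ fun j _ => monic_X_sub_C _
  have hdeg : (∏ j ∈ univ.erase i, (X - C (x j))).natDegree = n - 1 := by
    rw [natDegree_prod_of_monic _ _ fun j _ => monic_X_sub_C _]
    simp [Finset.card_erase_of_mem]
  rw [← hdeg, hmonic.coeff_natDegree, mul_one, ← Finset.prod_inv_distrib]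

open Polynomial in
lemma Sfun_base {F : Type*} [Field F] {n : ℕ} (x : Fin n → F)
    (hx : Function.Injective x) (hn : 1 ≤ n) {d : ℕ} (hd : d < n) :
    Sfun x d = if d = n - 1 then 1 else 0 := by
  have hinj : Set.InjOn x ↑(univ : Finset (Fin n)) := hx.injOn
  have hdeg : (X ^ d : F[X]).degree < ((univ : Finset (Fin n)).card : ℕ) := by
    rw [degree_X_pow, Finset.card_univ, Fintype.card_fin]
    exact_mod_cast hd
  have hI := Lagrange.eq_interpolate hinj hdeg
  have := congrArg (fun p => Polynomial.coeff p (n - 1)) hI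
  simp only [Lagrange.interpolate_apply, Polynomial.finset_sum_coeff,
    Polynomial.coeff_C_mul, Polynomial.coeff_X_pow, eval_pow, eval_X] at this
  rw [Finset.sum_congr rfl
    (fun i _ => by rw [coeff_basis_univ x i])] at this
  have hS : Sfun x d = ∑ i, x i ^ d * (∏ j ∈ univ.erase i, (x i - x j))⁻¹ := by
    simp [Sfun, div_eq_mul_inv]
  rw [hS, ← this]
  by_cases h : n - 1 = d
  · rw [if_pos h, if_pos h.symm]
  · rw [if_neg h, if_neg (fun hh => h hh.symm)]

section KeyH

variable {n : ℕ}

/-- The index set for the sign-reversing involution. -/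
def Sset (n m : ℕ) : Finset (Finset (Fin n) × (Fin n → ℕ)) :=
  ((univ : Finset (Fin n)).powerset ×ˢ
    Fintype.piFinset fun _ : Fin n => Finset.range (m + 1)).filter
    fun p => p.1.card + ∑ i, p.2 i = m

lemma mem_Sset {m : ℕ} {p : Finset (Fin n) × (Fin n → ℕ)} :
    p ∈ Sset n m ↔ p.1.card + ∑ i, p.2 i = m := by
  simp only [Sset, Finset.mem_filter, Finset.mem_product, Finset.mem_powerset,
    Fintype.mem_piFinset, Finset.mem_range]
  refine ⟨fun h => h.2, fun h => ⟨⟨Finset.subset_univ _, fun i => ?_⟩, h⟩⟩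
  have : p.2 i ≤ ∑ j, p.2 j := Finset.single_le_sum (fun j _ => Nat.zero_le _) (Finset.mem_univ i)
  omega

lemma mem_Sset' {m : ℕ} (p : Finset (Fin n) × (Fin n → ℕ)) :
    p ∈ Sset n m ↔ p.1 ∈ (univ : Finset (Fin n)).powerset ∧
      p.2 ∈ (if p.1.card ≤ m then Finset.Nat.antidiagonalTuple n (m - p.1.card) else ∅) := by
  rw [mem_Sset]
  constructor
  · intro h
    have hc : p.1.card ≤ m := by omega
    rw [if_pos hc, Finset.Nat.mem_antidiagonalTuple]
    exact ⟨Finset.mem_powerset.2 (Finset.subset_univ _), by omega⟩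
  · rintro ⟨-, h⟩
    split_ifs at h with hc
    · rw [Finset.Nat.mem_antidiagonalTuple] at h; omega
    · simp at h

/-- The set of "active" indices of a pair. -/
def uset (p : Finset (Fin n) × (Fin n → ℕ)) : Finset (Fin n) :=
  univ.filter fun i => i ∈ p.1 ∨ p.2 i ≠ 0

lemma uset_nonempty {m : ℕ} (hm : 1 ≤ m) {p : Finset (Fin n) × (Fin n → ℕ)}
    (hp : p ∈ Sset n m) : (uset p).Nonempty := by
  by_contra h
  rw [Finset.not_nonempty_iff_eq_empty, uset, Finset.filter_eq_empty_iff] at h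
  push_neg at h
  have h1 : p.1 = ∅ := Finset.eq_empty_of_forall_notMem fun i hi => (h (Finset.mem_univ i)).1 hi
  have h2 : ∑ i, p.2 i = 0 := Finset.sum_eq_zero fun i _ => (h (Finset.mem_univ i)).2
  rw [mem_Sset, h1, h2] at hp
  simp at hp
  omega

/-- Toggle operation at index `i`. -/
def toggle (p : Finset (Fin n) × (Fin n → ℕ)) (i : Fin n) :
    Finset (Fin n) × (Fin n → ℕ) :=
  if i ∈ p.1 then ⟨p.1.erase i, Function.update p.2 i (p.2 i + 1)⟩
  else ⟨insert i p.1, Function.update p.2 i (p.2 i - 1)⟩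

lemma uset_toggle (p : Finset (Fin n) × (Fin n → ℕ)) {i : Fin n} (hi : i ∈ uset p) :
    uset (toggle p i) = uset p := by
  rw [uset, Finset.mem_filter] at hi
  unfold toggle
  split_ifs with hmem
  · ext j
    simp only [uset, Finset.mem_filter, Finset.mem_univ, true_and, Finset.mem_erase]
    by_cases hj : j = i
    · subst hj; simp [hmem]
    · simp [hj, Function.update_of_ne hj]
  · have hlam : p.2 i ≠ 0 := hi.2.resolve_left hmem
    ext j
    simp only [uset, Finset.mem_filter, Finset.mem_univ, true_and, Finset.mem_insert]
    by_cases hj : j = i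
    · subst hj; simp [hlam]
    · simp [hj, Function.update_of_ne hj]

lemma toggle_toggle (p : Finset (Fin n) × (Fin n → ℕ)) {i : Fin n} (hi : i ∈ uset p) :
    toggle (toggle p i) i = p := by
  rw [uset, Finset.mem_filter] at hi
  by_cases hmem : i ∈ p.1
  · have h1 : toggle p i = (p.1.erase i, Function.update p.2 i (p.2 i + 1)) := if_pos hmem
    rw [h1, toggle]
    dsimp only
    rw [if_neg (Finset.notMem_erase i p.1)]
    refine Prod.ext ?_ ?_
    · simpa using Finset.insert_erase hmem
    · simp only [Function.update_self, Function.update_idem, Nat.add_sub_cancel]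
      simp [Function.update_eq_self]
  · have hlam : p.2 i ≠ 0 := hi.2.resolve_left hmem
    have h1 : toggle p i = (insert i p.1, Function.update p.2 i (p.2 i - 1)) := if_neg hmem
    rw [h1, toggle]
    dsimp only
    rw [if_pos (Finset.mem_insert_self i p.1)]
    refine Prod.ext ?_ ?_
    · simpa using Finset.erase_insert hmem
    · simp only [Function.update_self, Function.update_idem]
      rw [Nat.sub_add_cancel (Nat.one_le_iff_ne_zero.2 hlam)]
      simp [Function.update_eq_self]

/-- The involution. -/
def stepP (p : Finset (Fin n) × (Fin n → ℕ)) (h : (uset p).Nonempty) :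
    Finset (Fin n) × (Fin n → ℕ) :=
  toggle p ((uset p).min' h)

lemma stepP_stepP (p : Finset (Fin n) × (Fin n → ℕ)) (h : (uset p).Nonempty)
    (h2 : (uset (stepP p h)).Nonempty) : stepP (stepP p h) h2 = p := by
  have hmem : (uset p).min' h ∈ uset p := (uset p).min'_mem h
  have he : uset (stepP p h) = uset p := uset_toggle p hmem
  have hmin : (uset (stepP p h)).min' h2 = (uset p).min' h := by
    simp only [he]
  rw [stepP, hmin]
  exact toggle_toggle p hmem

lemma toggle_mem_Sset {m : ℕ} {p : Finset (Fin n) × (Fin n → ℕ)} (hp : p ∈ Sset n m)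
    {i : Fin n} (hi : i ∈ uset p) : toggle p i ∈ Sset n m := by
  rw [mem_Sset] at hp ⊢
  rw [uset, Finset.mem_filter] at hi
  have hsum : ∀ b : ℕ, ∑ j, Function.update p.2 i b j
      = b + ∑ j ∈ univ.erase i, p.2 j := by
    intro b
    rw [← Finset.add_sum_erase _ _ (Finset.mem_univ i)]
    congr 1
    · simp
    · exact Finset.sum_congr rfl fun j hj =>
        Function.update_of_ne (Finset.mem_erase.1 hj).1 _ _
  have hsum0 : ∑ j, p.2 j = p.2 i + ∑ j ∈ univ.erase i, p.2 j :=
    (Finset.add_sum_erase _ _ (Finset.mem_univ i)).symm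
  by_cases hmem : i ∈ p.1
  · rw [toggle, if_pos hmem]
    dsimp only
    rw [Finset.card_erase_of_mem hmem, hsum]
    have hc : 1 ≤ p.1.card := Finset.card_pos.2 ⟨i, hmem⟩
    omega
  · have hlam : p.2 i ≠ 0 := hi.2.resolve_left hmem
    rw [toggle, if_neg hmem]
    dsimp only
    rw [Finset.card_insert_of_notMem hmem, hsum]
    omega

lemma wt_toggle {F : Type*} [CommRing F] (x : Fin n → F)
    {p : Finset (Fin n) × (Fin n → ℕ)} {i : Fin n} (hi : i ∈ uset p) :
    ((-1 : F) ^ (toggle p i).1.card * (∏ j ∈ (toggle p i).1, x j) *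
        ∏ j, x j ^ (toggle p i).2 j)
      = -((-1) ^ p.1.card * (∏ j ∈ p.1, x j) * ∏ j, x j ^ p.2 j) := by
  rw [uset, Finset.mem_filter] at hi
  have hprodpow : ∀ b : ℕ, ∏ j, x j ^ Function.update p.2 i b j
      = x i ^ b * ∏ j ∈ univ.erase i, x j ^ p.2 j := by
    intro b
    rw [← Finset.mul_prod_erase _ _ (Finset.mem_univ i)]
    congr 1
    · simp
    · exact Finset.prod_congr rfl fun j hj => by
        rw [Function.update_of_ne (Finset.mem_erase.1 hj).1]
  have hprodpow0 : ∏ j, x j ^ p.2 j = x i ^ p.2 i * ∏ j ∈ univ.erase i, x j ^ p.2 j :=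
    (Finset.mul_prod_erase _ _ (Finset.mem_univ i)).symm
  by_cases hmem : i ∈ p.1
  · rw [toggle, if_pos hmem]
    dsimp only
    rw [hprodpow, hprodpow0]
    have hcard : (p.1.erase i).card + 1 = p.1.card := Finset.card_erase_add_one hmem
    have hprod : ∏ j ∈ p.1, x j = x i * ∏ j ∈ p.1.erase i, x j :=
      (Finset.mul_prod_erase _ _ hmem).symm
    rw [hprod, ← hcard, pow_succ, pow_succ]
    ring
  · have hlam : p.2 i ≠ 0 := hi.2.resolve_left hmem
    rw [toggle, if_neg hmem]
    dsimp only
    rw [hprodpow, hprodpow0]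
    obtain ⟨l, hl⟩ : ∃ l, p.2 i = l + 1 := ⟨p.2 i - 1, by omega⟩
    rw [Finset.card_insert_of_notMem hmem, Finset.prod_insert hmem, hl]
    simp only [Nat.add_sub_cancel, pow_succ]
    ring

lemma toggle_ne {p : Finset (Fin n) × (Fin n → ℕ)} (i : Fin n) : toggle p i ≠ p := by
  intro h
  have h1 := congrArg Prod.fst h
  by_cases hmem : i ∈ p.1
  · rw [toggle, if_pos hmem] at h1
    simp only at h1
    exact (Finset.notMem_erase i p.1) (h1.symm ▸ hmem)
  · rw [toggle, if_neg hmem] at h1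
    simp only at h1
    exact hmem (h1 ▸ Finset.mem_insert_self i p.1)

end KeyH

lemma key_h {F : Type*} [CommRing F] (n m : ℕ) (hm : 1 ≤ m) (x : Fin n → F) :
    ∑ t ∈ (univ : Finset (Fin n)).powerset,
      (-1) ^ t.card * (∏ i ∈ t, x i) * hpoly n ((m : ℤ) - t.card) x = 0 := by
  classical
  have hrw : ∀ t ∈ (univ : Finset (Fin n)).powerset,
      (-1 : F) ^ t.card * (∏ i ∈ t, x i) * hpoly n ((m : ℤ) - t.card) x
        = ∑ lam ∈ (if t.card ≤ m then Finset.Nat.antidiagonalTuple n (m - t.card) else ∅),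
            (-1) ^ t.card * (∏ i ∈ t, x i) * ∏ i, x i ^ lam i := by
    intro t ht
    by_cases hc : t.card ≤ m
    · rw [if_pos hc]
      have hcast : ((m : ℤ) - t.card) = ((m - t.card : ℕ) : ℤ) := by omega
      rw [hcast, hpoly_ofNat, Finset.mul_sum]
    · rw [if_neg hc, hpoly_neg n (by omega) x, Finset.sum_empty, mul_zero]
  rw [Finset.sum_congr rfl hrw,
    ← Finset.sum_finset_product' (Sset n m) _ _ (fun p => mem_Sset' p)]
  refine Finset.sum_involution (fun p hp => stepP p (uset_nonempty hm hp))
    (fun p hp => ?_) (fun p hp _ => ?_) (fun p hp => ?_) (fun p hp => ?_)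
  · unfold stepP
    rw [wt_toggle x ((uset p).min'_mem (uset_nonempty hm hp))]
    ring
  · exact toggle_ne _
  · exact toggle_mem_Sset hp ((uset p).min'_mem (uset_nonempty hm hp))
  · exact stepP_stepP p _ _

/-- Sylvester's identity. -/
theorem sylvester {F : Type*} [Field F] (n d : ℕ) (hn : 2 ≤ n)
    (x : Fin n → F) (hx : Function.Injective x) :
    ∑ i, x i ^ d / ∏ j ∈ Finset.univ.erase i, (x i - x j)
      = hpoly n ((d : ℤ) - n + 1) x := by
  have main : ∀ d : ℕ, Sfun x d = hpoly n ((d : ℤ) - n + 1) x := by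
    intro d
    induction d using Nat.strong_induction_on with
    | _ d ih =>
      by_cases hd : d < n
      · rw [Sfun_base x hx (by omega) hd]
        by_cases h : d = n - 1
        · have h0 : ((d : ℤ) - n + 1) = 0 := by omega
          rw [if_pos h, h0, hpoly_zero]
        · have hneg : ((d : ℤ) - n + 1) < 0 := by omega
          rw [if_neg h, hpoly_neg n hneg x]
      · push_neg at hd
        set m := d - n + 1 with hm
        have hm1 : 1 ≤ m := by omega
        have hA := key_h n m hm1 x
        have hB := key_S x d hd
        have hcomb : ∑ t ∈ (univ : Finset (Fin n)).powerset,
            (-1:F) ^ t.card * (∏ i ∈ t, x i)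
              * (Sfun x (d - t.card) - hpoly n ((m:ℤ) - t.card) x) = 0 := by
          simp only [mul_sub]
          rw [Finset.sum_sub_distrib, hB, hA, sub_zero]
        rw [Finset.sum_eq_single_of_mem (∅ : Finset (Fin n))
          (Finset.mem_powerset.2 (Finset.empty_subset _))
          (fun t ht hne => ?_)] at hcomb
        · have h0 : ((m:ℤ) - (∅ : Finset (Fin n)).card) = (d:ℤ) - n + 1 := by
            simp only [Finset.card_empty]
            omega
          rw [h0] at hcomb
          simp only [Finset.card_empty, pow_zero, Finset.prod_empty, one_mul, mul_one,
            Nat.sub_zero] at hcomb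
          exact sub_eq_zero.mp hcomb
        · have hc1 : 1 ≤ t.card := Finset.card_pos.2 (Finset.nonempty_of_ne_empty hne)
          have hcn : t.card ≤ n := by
            simpa using Finset.card_le_card (Finset.mem_powerset.1 ht)
          have hih : Sfun x (d - t.card) = hpoly n (((d - t.card : ℕ):ℤ) - n + 1) x :=
            ih _ (by omega)
          have hcast : ((m:ℤ) - t.card) = (((d - t.card : ℕ):ℤ) - n + 1) := by omega
          rw [hcast, ← hih, sub_self, mul_zero]
  exact main d
end

section
/- Let x_1,...,x_n be distinct complex numbers with n ≥ 2, and let z ∈ ℂ. Then the sum over i = 1,...,n of e^{x_i z} / ∏_{j ≠ i} (x_i - x_j) equals the convergent series ∑_{p=0}^∞ h_p(x_1,...,x_n) z^{p+n-1} / (p+n-1)!, where h_p is the complete homogeneous symmetric polynomial of degree p. -/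
open Finset

/-!
Expanding each exponential, the coefficient of `z ^ d / d!` on the left is the divided-difference
sum `S_d = ∑ᵢ xᵢ ^ d / ∏_{j ≠ i} (xᵢ - xⱼ)`, which is the coefficient of `X ^ (n - 1)` in the
Lagrange interpolant of `X ^ d`; hence `S_d = 0` for `d < n - 1`. For the remaining terms,
the partial fraction decomposition
`∏ᵢ (1 - xᵢ t)⁻¹ = ∑ᵢ (xᵢ ^ (n - 1) / ∏_{j ≠ i} (xᵢ - xⱼ)) (1 - xᵢ t)⁻¹`
(itself Lagrange interpolation of `u ^ (n - 1)`, read at `u = t⁻¹`) identifies `h_p` with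
`S_(p + n - 1)` by comparing coefficients of `t ^ p`.
-/

namespace PowerSeries

theorem one_sub_C_mul_X_mul_mk_pow {R : Type*} [CommRing R] (a : R) :
    (1 - C a * X) * mk (a ^ ·) = 1 := by
  simpa [rescale_mk, rescale_X, mul_comm] using congrArg (rescale a) (mk_one_mul_one_sub_eq_one R)

end PowerSeries

theorem hpoly_natCast_eq_coeff_prod {F : Type*} [CommRing F] (n p : ℕ) (x : Fin n → F) :
    hpoly n p x = PowerSeries.coeff p (∏ i, PowerSeries.mk (x i ^ ·)) := by
  rw [PowerSeries.coeff_prod, hpoly, if_pos (Int.natCast_nonneg p), Int.toNat_natCast]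
  refine sum_nbij' (fun f => Finsupp.equivFunOnFinite.symm f) (⇑) (fun f hf => ?_)
    (fun l hl => ?_) (fun f _ => Finsupp.equivFunOnFinite.apply_symm_apply f)
    (fun l _ => Finsupp.equivFunOnFinite.symm_apply_apply l) (fun f _ => by simp)
  · rw [Finset.Nat.mem_antidiagonalTuple] at hf
    simpa [Finset.mem_finsuppAntidiag] using hf
  · rw [Finset.mem_finsuppAntidiag] at hl
    exact Finset.Nat.mem_antidiagonalTuple.2 hl.1

namespace Lagrange

open Polynomial

variable {F ι : Type*} [Field F] [DecidableEq ι] {s : Finset ι} {v : ι → F}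

theorem sum_pow_div_prod_sub_of_lt (hvs : Set.InjOn v s) {d : ℕ} (hd : d < #s) :
    ∑ i ∈ s, v i ^ d / ∏ j ∈ s.erase i, (v i - v j) = if d = #s - 1 then 1 else 0 := by
  have h := coeff_eq_sum hvs (P := X ^ d) (by rw [degree_X_pow]; exact_mod_cast hd)
  simp only [coeff_X_pow, eval_pow, eval_X] at h
  rw [← h]
  exact if_congr eq_comm rfl rfl

theorem sum_pow_div_prod_sub_mul_prod_sub (hvs : Set.InjOn v s) (hs : s.Nonempty) (u : F) :
    ∑ i ∈ s, (v i ^ (#s - 1) / ∏ j ∈ s.erase i, (v i - v j)) * ∏ j ∈ s.erase i, (u - v j) =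
      u ^ (#s - 1) := by
  have h := congrArg (eval u) <| eq_interpolate (f := X ^ (#s - 1)) hvs <| by
    rw [degree_X_pow]; exact_mod_cast Nat.sub_lt hs.card_pos one_pos
  rw [interpolate_eq_sum] at h
  simp only [eval_finsetSum, eval_mul, eval_C, eval_prod, eval_sub, eval_X, eval_pow] at h
  exact h.symm

theorem sum_C_mul_prod_one_sub_C_mul_X [Infinite F] (hvs : Set.InjOn v s) (hs : s.Nonempty) :
    ∑ i ∈ s, C (v i ^ (#s - 1) / ∏ j ∈ s.erase i, (v i - v j)) *
      ∏ j ∈ s.erase i, (1 - C (v j) * X) = 1 := by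
  refine eq_of_infinite_eval_eq _ _ <| Set.Infinite.mono (s := {0}ᶜ) (fun t ht => ?_) <|
    Set.infinite_of_finite_compl (by simp)
  have hprod (i : ι) (hi : i ∈ s) :
      ∏ j ∈ s.erase i, (1 - v j * t) = t ^ (#s - 1) * ∏ j ∈ s.erase i, (t⁻¹ - v j) := by
    rw [← card_erase_of_mem hi, ← prod_const t, ← prod_mul_distrib]
    refine prod_congr rfl fun j _ => ?_
    field_simp [show t ≠ 0 from ht]
  simp only [Set.mem_ofPred_eq, eval_finsetSum, eval_mul, eval_C, eval_prod, eval_sub, eval_one, eval_X]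
  rw [sum_congr rfl fun i hi => by rw [hprod i hi, mul_left_comm], ← mul_sum,
    sum_pow_div_prod_sub_mul_prod_sub hvs hs, ← mul_pow, mul_inv_cancel₀ ht, one_pow]

theorem prod_mk_pow_eq_sum_C_mul_mk_pow [Infinite F] (hvs : Set.InjOn v s) (hs : s.Nonempty) :
    ∏ i ∈ s, PowerSeries.mk (v i ^ ·) = ∑ i ∈ s,
      PowerSeries.C (v i ^ (#s - 1) / ∏ j ∈ s.erase i, (v i - v j)) * PowerSeries.mk (v i ^ ·) := by
  -- both sides are inverse to `P`
  set P : PowerSeries F := ∏ i ∈ s, (1 - PowerSeries.C (v i) * PowerSeries.X) with hP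
  have hPG : (∏ i ∈ s, PowerSeries.mk (v i ^ ·)) * P = 1 := by
    rw [mul_comm, ← prod_mul_distrib]
    exact prod_eq_one fun i _ => PowerSeries.one_sub_C_mul_X_mul_mk_pow (v i)
  refine left_inv_eq_right_inv hPG ?_
  have h := congrArg (Polynomial.coeToPowerSeries.ringHom (R := F))
    (sum_C_mul_prod_one_sub_C_mul_X hvs hs)
  simp only [map_sum, map_mul, map_prod, map_sub, map_one,
    Polynomial.coeToPowerSeries.ringHom_apply, Polynomial.coe_C, Polynomial.coe_X] at h
  rw [mul_sum, ← h]
  refine sum_congr rfl fun i hi => ?_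
  rw [hP, ← mul_prod_erase _ _ hi]
  linear_combination (PowerSeries.C (v i ^ (#s - 1) / ∏ j ∈ s.erase i, (v i - v j)) *
    ∏ j ∈ s.erase i, (1 - PowerSeries.C (v j) * PowerSeries.X)) *
    PowerSeries.one_sub_C_mul_X_mul_mk_pow (v i)

theorem sum_pow_div_prod_sub_eq_coeff [Infinite F] (hvs : Set.InjOn v s) (hs : s.Nonempty)
    (p : ℕ) : ∑ i ∈ s, v i ^ (p + (#s - 1)) / ∏ j ∈ s.erase i, (v i - v j) =
      PowerSeries.coeff p (∏ i ∈ s, PowerSeries.mk (v i ^ ·)) := by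
  rw [prod_mk_pow_eq_sum_C_mul_mk_pow hvs hs, map_sum]
  refine sum_congr rfl fun i _ => ?_
  rw [PowerSeries.coeff_C_mul, PowerSeries.coeff_mk, pow_add]
  ring

end Lagrange

section Sfun

variable {F : Type*} [Field F] {n : ℕ} {x : Fin n → F}

theorem sfun_eq_zero_of_lt (hx : Function.Injective x) {d : ℕ} (hd : d < n - 1) :
    Sfun x d = 0 := by
  have h := Lagrange.sum_pow_div_prod_sub_of_lt hx.injOn (s := univ) (d := d)
  simp only [card_univ, Fintype.card_fin] at h
  rw [Sfun, h (by omega), if_neg hd.ne]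

theorem sfun_add_eq_hpoly [Infinite F] (hn : 0 < n) (hx : Function.Injective x) (p : ℕ) :
    Sfun x (p + (n - 1)) = hpoly n p x := by
  have h := Lagrange.sum_pow_div_prod_sub_eq_coeff hx.injOn (univ_nonempty_iff.2 ⟨⟨0, hn⟩⟩) p
  simp only [card_univ, Fintype.card_fin] at h
  rw [Sfun, h, hpoly_natCast_eq_coeff_prod]

end Sfun

theorem hasSum_sum_exp_mul_div {ι : Type*} (s : Finset ι) (a b : ι → ℂ) (z : ℂ) :
    HasSum (fun d : ℕ => (∑ i ∈ s, a i ^ d / b i) * z ^ d / d.factorial)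
      (∑ i ∈ s, Complex.exp (a i * z) / b i) := by
  simp_rw [Complex.exp_eq_exp_ℂ]
  refine (hasSum_sum fun i _ => ((NormedSpace.expSeries_div_hasSum_exp (a i * z)).div_const
    (b i))).congr_fun fun d => ?_
  rw [sum_mul, sum_div]
  refine sum_congr rfl fun i _ => ?_
  ring

/-- The exponential generating function form of Sylvester's identity. -/
theorem sylvester_exp (n : ℕ) (hn : 2 ≤ n) (x : Fin n → ℂ)
    (hx : Function.Injective x) (z : ℂ) :
    ∑ i, Complex.exp (x i * z) / ∏ j ∈ Finset.univ.erase i, (x i - x j)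
      = ∑' p : ℕ, hpoly n (p : ℤ) x * z ^ (p + n - 1) / ((p + n - 1).factorial : ℂ) := by
  have hsum : HasSum (fun d => Sfun x d * z ^ d / d.factorial) _ :=
    hasSum_sum_exp_mul_div univ x (fun i => ∏ j ∈ univ.erase i, (x i - x j)) z
  have hhead : ∑ d ∈ range (n - 1), Sfun x d * z ^ d / d.factorial = 0 :=
    sum_eq_zero fun d hd => by rw [sfun_eq_zero_of_lt hx (mem_range.1 hd), zero_mul, zero_div]
  have htail := (hasSum_nat_add_iff' (n - 1)).2 hsum
  rw [hhead, sub_zero] at htail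
  refine htail.tsum_eq.symm.trans (tsum_congr fun p => ?_)
  rw [sfun_add_eq_hpoly (by omega) hx, show p + (n - 1) = p + n - 1 by omega]
end

section
/- For any positive integers n and d, the alternating sum ∑_{i=1}^n (-1)^{i-1} C(n,i) / i^d equals the sum over all weakly increasing d-tuples 1 ≤ i_1 ≤ i_2 ≤ ... ≤ i_d ≤ n of 1/(i_1 i_2 ··· i_d). -/
/-!
Both sides, as functions `F n d`, satisfy `F 0 (d + 1) = 0`, `F (n + 1) 0 = 1` and
`F (n + 1) (d + 1) = F n (d + 1) + F (n + 1) d / (n + 1)`, which determine `F n d` for `n > 0`.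
The right side is the complete homogeneous symmetric polynomial `h_d(1, 1/2, …, 1/n)`, and the
recurrence comes from splitting off the tuples with `i_d = n`. On the left it is, termwise, Pascal's
rule combined with the absorption identity `(n + 1) C(n, i - 1) = i C(n + 1, i)`.
-/

open Finset
open scoped Classical

theorem Monotone.fin_snoc {α : Type*} [Preorder α] {d : ℕ} {f : Fin d → α} {a : α}
    (hf : Monotone f) (ha : ∀ i, f i ≤ a) : Monotone (Fin.snoc f a : Fin (d + 1) → α) := by
  intro i j hij
  cases j using Fin.lastCases with
  | last => cases i using Fin.lastCases <;> simp [ha]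
  | cast j =>
    cases i using Fin.lastCases with
    | last => exact absurd hij (not_le.2 (Fin.castSucc_lt_last j))
    | cast i => simpa using hf (Fin.castSucc_le_castSucc_iff.1 hij)

section MonotoneSum

variable {R : Type*} [CommSemiring R] (w : ℕ → R)

noncomputable def monotoneSum (n d : ℕ) : R :=
  ∑ f ∈ univ.filter (fun f : Fin d → Fin n => Monotone f), ∏ k, w (f k)

theorem monotoneSum_zero_right (n : ℕ) : monotoneSum w n 0 = 1 := by
  simp [monotoneSum, Subsingleton.monotone]

theorem monotoneSum_zero_left (d : ℕ) : monotoneSum w 0 (d + 1) = 0 := by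
  simp [monotoneSum]

theorem monotoneSum_eq_sum_last_ne (n d : ℕ) :
    monotoneSum w n (d + 1) =
      ∑ f ∈ univ.filter (fun f : Fin (d + 1) → Fin (n + 1) =>
        Monotone f ∧ f (Fin.last d) ≠ Fin.last n), ∏ k, w (f k) := by
  refine sum_bij (fun g _ => Fin.castSucc ∘ g) ?_ ?_ ?_ ?_
  · intro g hg
    simp only [mem_filter, mem_univ, true_and] at hg ⊢
    exact ⟨Fin.strictMono_castSucc.monotone.comp hg, (Fin.castSucc_lt_last _).ne⟩
  · intro g _ g' _ h
    exact (Fin.castSucc_injective n).comp_left h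
  · intro f hf
    simp only [mem_filter, mem_univ, true_and] at hf
    obtain ⟨hmono, hlast⟩ := hf
    have hne : ∀ k, f k ≠ Fin.last n := fun k =>
      ((hmono (Fin.le_last k)).trans_lt (Fin.lt_last_iff_ne_last.2 hlast)).ne
    refine ⟨fun k => (f k).castPred (hne k), ?_, ?_⟩
    · simp only [mem_filter, mem_univ, true_and]
      intro i j hij
      simpa [Fin.castPred_le_castPred_iff] using hmono hij
    · ext k
      simp
  · intro g _
    simp

theorem mul_monotoneSum_eq_sum_last_eq (n d : ℕ) :
    w n * monotoneSum w (n + 1) d =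
      ∑ f ∈ univ.filter (fun f : Fin (d + 1) → Fin (n + 1) =>
        Monotone f ∧ f (Fin.last d) = Fin.last n), ∏ k, w (f k) := by
  rw [monotoneSum, mul_sum]
  refine sum_bij (fun g _ => Fin.snoc g (Fin.last n)) ?_ ?_ ?_ ?_
  · intro g hg
    simp only [mem_filter, mem_univ, true_and] at hg ⊢
    exact ⟨hg.fin_snoc fun _ => Fin.le_last _, Fin.snoc_last _ _⟩
  · intro g _ g' _ h
    exact Fin.snoc_left_injective _ h
  · intro f hf
    simp only [mem_filter, mem_univ, true_and] at hf
    obtain ⟨hmono, hlast⟩ := hf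
    refine ⟨Fin.init f, ?_, ?_⟩
    · simp only [mem_filter, mem_univ, true_and]
      exact hmono.comp Fin.strictMono_castSucc.monotone
    · rw [← hlast, Fin.snoc_init_self]
  · intro g _
    simp [Fin.prod_univ_castSucc, mul_comm]

theorem monotoneSum_succ_succ (n d : ℕ) :
    monotoneSum w (n + 1) (d + 1) = monotoneSum w n (d + 1) + w n * monotoneSum w (n + 1) d := by
  rw [monotoneSum_eq_sum_last_ne w n d, mul_monotoneSum_eq_sum_last_eq, ← filter_filter,
    ← filter_filter, sum_filter_not_add_sum_filter, monotoneSum]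

theorem eq_monotoneSum_of_recurrence {F : ℕ → ℕ → R} (h0 : ∀ d, F 0 (d + 1) = 0)
    (h1 : ∀ n, F (n + 1) 0 = 1)
    (hrec : ∀ n d, F (n + 1) (d + 1) = F n (d + 1) + w n * F (n + 1) d) (n d : ℕ) :
    F (n + 1) d = monotoneSum w (n + 1) d := by
  have hpos : ∀ n d, F n (d + 1) = monotoneSum w n (d + 1) := by
    intro n
    induction n with
    | zero => intro d; rw [h0, monotoneSum_zero_left]
    | succ n ihn =>
      intro d
      induction d with
      | zero => rw [hrec, monotoneSum_succ_succ, ihn, h1, monotoneSum_zero_right]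
      | succ d ihd => rw [hrec, monotoneSum_succ_succ, ihn, ihd]
  cases d with
  | zero => rw [h1, monotoneSum_zero_right]
  | succ d => exact hpos (n + 1) d

end MonotoneSum

def alternatingChooseSum (K : Type*) [Field K] (n d : ℕ) : K :=
  ∑ i ∈ Icc 1 n, (-1 : K) ^ (i - 1) * (n.choose i : K) / (i : K) ^ d

section AlternatingChooseSum

variable {K : Type*} [Field K]

theorem alternatingChooseSum_eq_sum_range (n d : ℕ) :
    alternatingChooseSum K n d =
      ∑ i ∈ range n, (-1 : K) ^ i * (n.choose (i + 1) : K) / ((i : K) + 1) ^ d := by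
  rw [alternatingChooseSum, ← Finset.Ico_add_one_right_eq_Icc, sum_Ico_eq_sum_range]
  simp [add_comm 1]

theorem alternatingChooseSum_zero_left (d : ℕ) : alternatingChooseSum K 0 d = 0 := by
  simp [alternatingChooseSum]

theorem alternatingChooseSum_succ_zero (n : ℕ) : alternatingChooseSum K (n + 1) 0 = 1 := by
  have hvanish := Int.alternating_sum_range_choose_of_ne (Nat.succ_ne_zero n)
  rw [sum_range_succ'] at hvanish
  have hsum : ∑ i ∈ range (n + 1), (-1 : ℤ) ^ i * ((n + 1).choose (i + 1) : ℤ) = 1 := by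
    simp [pow_succ] at hvanish
    linarith
  rw [alternatingChooseSum_eq_sum_range]
  simpa using congrArg (Int.cast : ℤ → K) hsum

variable [CharZero K]

theorem cast_choose_succ_div_pow_succ (n k d : ℕ) :
    ((n + 1).choose (k + 1) : K) / ((k : K) + 1) ^ (d + 1) =
      (n.choose (k + 1) : K) / ((k : K) + 1) ^ (d + 1) +
        1 / ((n : K) + 1) * (((n + 1).choose (k + 1) : K) / ((k : K) + 1) ^ d) := by
  have hpascal : ((n + 1).choose (k + 1) : K) = n.choose k + n.choose (k + 1) := by
    exact_mod_cast Nat.choose_succ_succ n k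
  have habsorb : ((n : K) + 1) * n.choose k = (n + 1).choose (k + 1) * ((k : K) + 1) := by
    exact_mod_cast Nat.add_one_mul_choose_eq n k
  rw [pow_succ]
  field_simp
  linear_combination ((n : K) + 1) * hpascal + habsorb

theorem alternatingChooseSum_succ_succ (n d : ℕ) :
    alternatingChooseSum K (n + 1) (d + 1) =
      alternatingChooseSum K n (d + 1) + 1 / ((n : K) + 1) * alternatingChooseSum K (n + 1) d := by
  simp only [alternatingChooseSum_eq_sum_range, mul_div_assoc, cast_choose_succ_div_pow_succ,
    mul_add, sum_add_distrib, mul_sum]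
  congr 1
  · rw [sum_range_succ, Nat.choose_succ_self, Nat.cast_zero, zero_div, mul_zero, add_zero]
  · exact sum_congr rfl fun _ _ => mul_left_comm _ _ _

end AlternatingChooseSum

theorem dilcher_general (n d : ℕ) (hn : 0 < n) :
    ∑ i ∈ Finset.Icc 1 n, (-1 : ℚ) ^ (i - 1) * (n.choose i : ℚ) / (i : ℚ) ^ d
      = ∑ f ∈ Finset.univ.filter (fun f : Fin d → Fin n => Monotone f),
          ∏ k, (1 / ((f k : ℕ) + 1 : ℚ)) := by
  obtain ⟨m, rfl⟩ := Nat.exists_eq_add_one_of_ne_zero hn.ne'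
  exact eq_monotoneSum_of_recurrence (fun i => 1 / ((i : ℚ) + 1)) alternatingChooseSum_zero_left
    alternatingChooseSum_succ_zero alternatingChooseSum_succ_succ m d

/-- Dilcher's identity. -/
theorem dilcher (n d : ℕ) (hn : 0 < n) (hd : 0 < d) :
    ∑ i ∈ Finset.Icc 1 n, (-1 : ℚ) ^ (i - 1) * (n.choose i : ℚ) / (i : ℚ) ^ d
      = ∑ f ∈ Finset.univ.filter (fun f : Fin d → Fin n => Monotone f),
          ∏ k, (1 / ((f k : ℕ) + 1 : ℚ)) :=
  dilcher_general n d hn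
end

section
/- Let x_1,...,x_n be elements of a field F and let d ≥ n. Define R(X) = ∑_{m=0}^{n-1} (∑_{k=n-m}^{n} (-1)^{k-1} e_k h_{d-m-k}) X^m, where e_k and h_j are the elementary and complete homogeneous symmetric polynomials in x_1,...,x_n (h_j = 0 for j < 0). Then X^d - R(X) is divisible by ∏_{i=1}^n (X - x_i) in F[X]; equivalently, R(X) is the remainder of X^d upon division by ∏_{i=1}^n (X - x_i). -/
open Finset

open Polynomial

/-!
Vieta gives `∏ (X - x_i) = ∑ₖ (-1)ᵏ eₖ X^(n-k)`, and multiplying the generating functions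
`∏ (1 - x_i t) = ∑ₖ (-1)ᵏ eₖ tᵏ` and `∏ (1 - x_i t)⁻¹ = ∑ⱼ hⱼ tʲ` gives
`∑ₖ (-1)ᵏ eₖ h_(j-k) = [j = 0]`. Comparing coefficients with this identity shows that
`X^d - R(X) = (∑_{a ≤ d-n} h_(d-n-a) X^a) · ∏ (X - x_i)`, which exhibits the quotient.
-/

theorem PowerSeries.one_sub_C_mul_X_mul_mk_pow_s10 {R : Type*} [CommRing R] (a : R) :
    (1 - C a * X) * mk (fun j => a ^ j) = 1 := by
  have h := congrArg (rescale a) (mk_one_mul_one_sub_eq_one (S := R))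
  rw [map_mul, map_one, map_sub, map_one, rescale_X, rescale_mk, mul_comm] at h
  simpa using h

section

variable {F : Type*} [CommRing F] {n : ℕ}

theorem hpoly_of_neg {k : ℤ} (hk : k < 0) (x : Fin n → F) : hpoly n k x = 0 :=
  if_neg (not_le.2 hk)

theorem epoly_of_lt {k : ℕ} (hk : n < k) (x : Fin n → F) : epoly n k x = 0 := by
  rw [epoly, powersetCard_eq_empty.2 (by simpa using hk), sum_empty]

theorem coeff_prod_mk_pow (x : Fin n → F) (k : ℕ) :
    PowerSeries.coeff k (∏ i, PowerSeries.mk fun j => x i ^ j) = hpoly n k x := by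
  classical
  rw [PowerSeries.coeff_prod, hpoly, if_pos (by positivity), Int.toNat_natCast,
    ← piAntidiag_univ_fin_eq_antidiagonalTuple, finsuppAntidiag, sum_map,
    ← sum_attach (piAntidiag _ _)]
  simp [PowerSeries.coeff_mk]

theorem coeff_prod_one_sub_C_mul_X (x : Fin n → F) (k : ℕ) :
    PowerSeries.coeff k (∏ i, (1 - PowerSeries.C (x i) * PowerSeries.X)) =
      (-1) ^ k * epoly n k x := by
  classical
  have hprod_neg (t : Finset (Fin n)) : ∏ i ∈ t, -(PowerSeries.C (x i) * PowerSeries.X) =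
      PowerSeries.C ((-1) ^ #t * ∏ i ∈ t, x i) * PowerSeries.X ^ #t := by
    rw [prod_neg, prod_mul_distrib, prod_const, map_mul, map_pow, map_neg, map_one, map_prod]
    ring
  simp_rw [sub_eq_add_neg, prod_one_add, hprod_neg, map_sum, PowerSeries.coeff_C_mul_X_pow,
    sum_ite, sum_const_zero, add_zero, epoly, mul_sum, powersetCard_eq_filter, powerset_univ]
  refine sum_congr (by simp [eq_comm]) fun t ht => ?_
  rw [(mem_filter.1 ht).2]

theorem sum_neg_one_pow_mul_epoly_mul_hpoly (x : Fin n → F) (t : ℤ) :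
    ∑ k ∈ range (n + 1), (-1) ^ k * epoly n k x * hpoly n (t - k) x =
      if t = 0 then 1 else 0 := by
  rcases lt_or_ge t 0 with ht | ht
  · rw [if_neg ht.ne]
    exact sum_eq_zero fun k _ => by rw [hpoly_of_neg (by omega), mul_zero]
  lift t to ℕ using ht
  set g : ℕ → F := fun k => (-1) ^ k * epoly n k x * hpoly n (t - k) x
  have hg (k : ℕ) (hk : n < k ∨ t < k) : g k = 0 := by
    rcases hk with hk | hk
    · simp only [g, epoly_of_lt hk, mul_zero, zero_mul]
    · simp only [g, hpoly_of_neg (show (t : ℤ) - k < 0 by omega), mul_zero]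
  have hprod : (∏ i, (1 - PowerSeries.C (x i) * PowerSeries.X)) *
      ∏ i, PowerSeries.mk (fun j => x i ^ j) = 1 := by
    rw [← prod_mul_distrib]
    exact prod_eq_one fun i _ => PowerSeries.one_sub_C_mul_X_mul_mk_pow_s10 (x i)
  calc ∑ k ∈ range (n + 1), g k
      = ∑ k ∈ range (t + n + 1), g k :=
        sum_subset (range_subset_range.2 (by omega))
          fun k _ hk => hg k (.inl (by simp at hk; omega))
    _ = ∑ k ∈ range (t + 1), g k :=
        (sum_subset (range_subset_range.2 (by omega))
          fun k _ hk => hg k (.inr (by simp at hk; omega))).symm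
    _ = PowerSeries.coeff t ((∏ i, (1 - PowerSeries.C (x i) * PowerSeries.X)) *
          ∏ i, PowerSeries.mk (fun j => x i ^ j)) := by
        rw [PowerSeries.coeff_mul, Nat.sum_antidiagonal_eq_sum_range_succ_mk]
        refine sum_congr rfl fun k hk => ?_
        rw [coeff_prod_one_sub_C_mul_X, coeff_prod_mk_pow,
          Nat.cast_sub (by simpa [Nat.lt_succ_iff] using hk)]
    _ = if (t : ℤ) = 0 then 1 else 0 := by
        rw [hprod, PowerSeries.coeff_one]
        simp

theorem prod_X_sub_C_eq_sum_epoly (x : Fin n → F) :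
    ∏ i, (X - C (x i)) = ∑ k ∈ range (n + 1), C ((-1) ^ k * epoly n k x) * X ^ (n - k) := by
  have h := Multiset.prod_X_sub_X_eq_sum_esymm (univ.val.map x)
  rw [Multiset.map_map, Multiset.card_map, card_val, card_univ, Fintype.card_fin] at h
  rw [prod_eq_multiset_prod]
  refine h.trans (sum_congr rfl fun k _ => ?_)
  rw [epoly, ← esymm_map_val, map_mul, map_pow, map_neg, map_one, mul_assoc]

theorem coeff_mul_prod_X_sub_C (x : Fin n → F) (Q : F[X]) (s : ℕ) :
    (Q * ∏ i, (X - C (x i))).coeff s =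
      ∑ k ∈ Icc (n - s) n, (-1) ^ k * epoly n k x * Q.coeff (s + k - n) := by
  rw [prod_X_sub_C_eq_sum_epoly, mul_sum, finsetSum_coeff]
  simp_rw [mul_left_comm Q, coeff_C_mul, coeff_mul_X_pow', mul_ite, mul_zero]
  rw [← sum_filter]
  refine sum_congr (by ext k; simp; omega) fun k hk => ?_
  rw [show s - (n - k) = s + k - n by simp at hk; omega]

theorem X_pow_sub_remainder_eq_mul_prod_X_sub_C {d : ℕ} (hd : n ≤ d) (x : Fin n → F) :
    X ^ d - ∑ m ∈ range n,
        C (∑ k ∈ Icc (n - m) n, (-1 : F) ^ (k - 1) * epoly n k x * hpoly n ((d : ℤ) - m - k) x)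
          * X ^ m =
      (∑ a ∈ range (d - n + 1), C (hpoly n ((d : ℤ) - n - a) x) * X ^ a) *
        ∏ i, (X - C (x i)) := by
  set Q : F[X] := ∑ a ∈ range (d - n + 1), C (hpoly n ((d : ℤ) - n - a) x) * X ^ a
  have hQ (a : ℕ) : Q.coeff a = hpoly n ((d : ℤ) - n - a) x := by
    simp only [Q, finsetSum_coeff, coeff_C_mul_X_pow, sum_ite_eq, mem_range]
    split_ifs with ha
    · rfl
    · rw [hpoly_of_neg (by omega)]
  ext s
  have hQP : (Q * ∏ i, (X - C (x i))).coeff s =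
      ∑ k ∈ Icc (n - s) n, (-1) ^ k * epoly n k x * hpoly n ((d : ℤ) - s - k) x := by
    rw [coeff_mul_prod_X_sub_C]
    refine sum_congr rfl fun k hk => ?_
    rw [mem_Icc] at hk
    rw [hQ]
    congr 2
    omega
  rw [hQP, coeff_sub, coeff_X_pow, finsetSum_coeff]
  simp only [coeff_C_mul_X_pow, sum_ite_eq, mem_range]
  rcases lt_or_ge s n with hs | hs
  · rw [if_neg (by omega), if_pos hs, zero_sub, ← sum_neg_distrib]
    refine sum_congr rfl fun k hk => ?_
    obtain ⟨j, rfl⟩ : ∃ j, k = j + 1 := ⟨k - 1, by simp only [mem_Icc] at hk; omega⟩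
    rw [Nat.add_sub_cancel, pow_succ]
    ring
  · rw [if_neg hs.not_gt, sub_zero, Nat.sub_eq_zero_of_le hs, ← Nat.range_succ_eq_Icc_zero,
      sum_neg_one_pow_mul_epoly_mul_hpoly]
    simp only [sub_eq_zero, Nat.cast_inj, eq_comm]

end

/-- The explicit remainder of `X^d` upon division by `∏ (X - x_i)`. -/
theorem remainder_formula {F : Type*} [Field F] (n d : ℕ) (hd : n ≤ d)
    (x : Fin n → F) :
    (∏ i, (Polynomial.X - Polynomial.C (x i))) ∣
      (Polynomial.X ^ d -
        ∑ m ∈ Finset.range n,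
          Polynomial.C (∑ k ∈ Finset.Icc (n - m) n,
              (-1 : F) ^ (k - 1) * epoly n k x * hpoly n ((d : ℤ) - m - k) x)
            * Polynomial.X ^ m) :=
  Dvd.intro_left _ (X_pow_sub_remainder_eq_mul_prod_X_sub_C hd x).symm
end

section
/- Let x_1,...,x_n be distinct elements of a field F, n ≥ 2. For each 0 ≤ d ≤ n-1 and 0 ≤ m ≤ n-1, the sum ∑_{i=1}^n x_i^d e_m(x_1,...,x̂_i,...,x_n) / ∏_{j ≠ i}(x_i - x_j) equals (-1)^m if d + m = n - 1, and 0 otherwise, where x̂_i denotes omission of x_i and e_m is the elementary symmetric polynomial in the remaining n-1 variables. -/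
open Finset Polynomial

/-- The extended Euler identity. -/
theorem extended_euler {F : Type*} [Field F] (n d m : ℕ) (hn : 2 ≤ n)
    (hd : d ≤ n - 1) (hm : m ≤ n - 1) (x : Fin n → F) (hx : Function.Injective x) :
    ∑ i, (x i ^ d * ∑ s ∈ (Finset.univ.erase i).powersetCard m, ∏ j ∈ s, x j)
        / ∏ j ∈ Finset.univ.erase i, (x i - x j)
      = if d + m = n - 1 then (-1 : F) ^ m else 0 := by
  classical
  have hinj : Set.InjOn x (Finset.univ : Finset (Fin n)) := fun a _ b _ h => hx h
  have hcard : #(Finset.univ : Finset (Fin n)) = n := by simp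
  have hkey : (X ^ d : F[X]) = Lagrange.interpolate Finset.univ x (fun i => x i ^ d) := by
    have h := Lagrange.eq_interpolate (v := x) (f := (X ^ d : F[X])) hinj (by
      rw [hcard, degree_X_pow]
      exact_mod_cast by omega)
    simpa using h
  -- coefficient of each basis polynomial
  have hbasis : ∀ i : Fin n, (Lagrange.basis Finset.univ x i).coeff (n - 1 - m)
      = (∏ j ∈ Finset.univ.erase i, (x i - x j))⁻¹ *
        ((-1 : F) ^ m * ∑ s ∈ (Finset.univ.erase i).powersetCard m, ∏ j ∈ s, x j) := by
    intro i
    have hfact : Lagrange.basis Finset.univ x i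
        = C (∏ j ∈ Finset.univ.erase i, (x i - x j))⁻¹ *
          ∏ j ∈ Finset.univ.erase i, (X - C (x j)) := by
      rw [Lagrange.basis]
      simp_rw [Lagrange.basisDivisor]
      rw [Finset.prod_mul_distrib, ← map_prod, ← Finset.prod_inv_distrib]
    have hcarde : #(Finset.univ.erase i) = n - 1 := by
      rw [card_erase_of_mem (mem_univ i), hcard]
    have hP : (∏ j ∈ Finset.univ.erase i, (X - C (x j))).coeff (n - 1 - m)
        = (-1 : F) ^ m * ∑ s ∈ (Finset.univ.erase i).powersetCard m, ∏ j ∈ s, x j := by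
      have hmc : Multiset.card ((Finset.univ.erase i).val.map x) = n - 1 := by
        rw [Multiset.card_map]; exact hcarde
      have h := Multiset.prod_X_sub_C_coeff ((Finset.univ.erase i).val.map x)
        (k := n - 1 - m) (by rw [hmc]; omega)
      rw [Multiset.map_map] at h
      have hprodeq : ∏ j ∈ Finset.univ.erase i, (X - C (x j))
          = (((Finset.univ.erase i).val.map (fun j => X - C (x j)))).prod := rfl
      rw [hprodeq]
      have hm' : n - 1 - (n - 1 - m) = m := by omega
      rw [show ((fun t => X - C t) ∘ x) = fun j => X - C (x j) from rfl] at h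
      rw [h, hmc, hm', Finset.esymm_map_val]
    rw [hfact, coeff_C_mul, hP]
  -- take coefficient n-1-m of both sides of hkey
  have hc := congrArg (fun p : F[X] => p.coeff (n - 1 - m)) hkey
  simp only [Lagrange.interpolate_apply, Polynomial.finset_sum_coeff, coeff_C_mul] at hc
  simp_rw [hbasis] at hc
  have h1 : ((-1 : F) ^ m) * ((-1 : F) ^ m) = 1 := by
    rw [← mul_pow]; simp
  calc ∑ i, (x i ^ d * ∑ s ∈ (Finset.univ.erase i).powersetCard m, ∏ j ∈ s, x j)
        / ∏ j ∈ Finset.univ.erase i, (x i - x j)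
      = (-1 : F) ^ m * ∑ i, x i ^ d *
          ((∏ j ∈ Finset.univ.erase i, (x i - x j))⁻¹ *
            ((-1 : F) ^ m * ∑ s ∈ (Finset.univ.erase i).powersetCard m, ∏ j ∈ s, x j)) := by
        rw [Finset.mul_sum]
        refine Finset.sum_congr rfl fun i _ => ?_
        rw [div_eq_mul_inv]
        linear_combination (-(x i ^ d * (∑ s ∈ (Finset.univ.erase i).powersetCard m, ∏ j ∈ s, x j) * (∏ j ∈ Finset.univ.erase i, (x i - x j))⁻¹)) * h1
    _ = (-1 : F) ^ m * (X ^ d : F[X]).coeff (n - 1 - m) := by rw [← hc]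
    _ = if d + m = n - 1 then (-1 : F) ^ m else 0 := by
        rw [coeff_X_pow]
        by_cases h : d + m = n - 1
        · rw [if_pos (by omega), if_pos h, mul_one]
        · rw [if_neg (by omega), if_neg h, mul_zero]
end

section
/- Let x_1,...,x_n be distinct elements of a field F, n ≥ 2, and let a ∈ F. Then ∑_{i=1}^n ∏_{j ≠ i} (1 - a x_i x_j)/(x_i - x_j) equals a^{(n-1)/2} if n is odd, and 0 if n is even. -/
/-!
Expanding in powers of `a`, the coefficient of `a ^ k` in `∏_{j ≠ i} (1 - a x_i x_j)` is
`x_i ^ k` times the `k`-th coefficient of `q_i = ∏_{j ≠ i} (1 - x_j X) = R / (1 - x_i X)`, where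
`R = ∏_j (1 - x_j X)`. Dividing out `1 - x_i X` from the bottom of `R` makes this a polynomial in
`x_i` of degree `2k` with leading coefficient `1`; when `2k ≥ n`, dividing it out from the top
(using `deg q_i < n`) makes it a polynomial of degree `< k` instead. By Lagrange interpolation,
`∑_i x_i ^ m / ∏_{j ≠ i} (x_i - x_j)` is `1` for `m = n - 1` and `0` for `m < n - 1`, so the
coefficient of `a ^ k` in the whole sum is `1` if `2k + 1 = n` and `0` otherwise.
-/

open Finset Polynomial

namespace Polynomial

variable {R : Type*} [CommRing R] {p q : R[X]} {c : R}

theorem coeff_succ_of_eq_one_sub_C_mul_X_mul (h : p = (1 - C c * X) * q) (m : ℕ) :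
    q.coeff (m + 1) = p.coeff (m + 1) + c * q.coeff m := by
  rw [h, sub_mul, one_mul, coeff_sub, mul_assoc, coeff_C_mul, coeff_X_mul]
  ring

theorem coeff_eq_sum_of_eq_one_sub_C_mul_X_mul (h : p = (1 - C c * X) * q) (m : ℕ) :
    q.coeff m = ∑ l ∈ range (m + 1), c ^ l * p.coeff (m - l) := by
  induction m with
  | zero => simp [h]
  | succ m ih =>
    rw [coeff_succ_of_eq_one_sub_C_mul_X_mul h, ih, sum_range_succ' _ (m + 1), mul_sum]
    simp only [pow_succ', mul_assoc, Nat.add_sub_add_right, pow_zero, one_mul, Nat.sub_zero]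
    ring

theorem pow_mul_coeff_of_eq_one_sub_C_mul_X_mul (h : p = (1 - C c * X) * q) (m j : ℕ) :
    c ^ j * q.coeff m = q.coeff (m + j) - ∑ l ∈ range j, c ^ l * p.coeff (m + j - l) := by
  induction j with
  | zero => simp
  | succ j ih =>
    rw [pow_succ', mul_assoc, ih, mul_sub, mul_sum, ← add_assoc,
      coeff_succ_of_eq_one_sub_C_mul_X_mul h, sum_range_succ']
    simp only [pow_succ', mul_assoc, Nat.add_sub_add_right, pow_zero, one_mul, Nat.sub_zero]
    ring

end Polynomial

theorem Finset.sum_range_pow_mul_ite_two_mul_add_one_eq {M : Type*} [Semiring M] (a : M)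
    (n : ℕ) :
    ∑ k ∈ range n, a ^ k * (if 2 * k + 1 = n then 1 else 0)
      = if Odd n then a ^ ((n - 1) / 2) else 0 := by
  simp_rw [mul_ite, mul_one, mul_zero]
  split_ifs with hn
  · obtain ⟨m, rfl⟩ := hn
    have hk : ∀ k, 2 * k + 1 = 2 * m + 1 ↔ k = m := by omega
    simp_rw [hk]
    rw [sum_ite_eq', if_pos (mem_range.mpr (by omega)), show (2 * m + 1 - 1) / 2 = m by omega]
  · exact sum_eq_zero fun k _ => if_neg fun h => hn ⟨k, h.symm⟩

namespace Lagrange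

variable {F : Type*} [Field F] {ι : Type*} {s : Finset ι} {v : ι → F}

noncomputable def revNodal (s : Finset ι) (v : ι → F) : F[X] :=
  ∏ i ∈ s, (1 - C (v i) * X)

theorem eval_revNodal (u : F) : (revNodal s v).eval u = ∏ i ∈ s, (1 - v i * u) := by
  simp [revNodal, eval_prod]

theorem natDegree_revNodal_le : (revNodal s v).natDegree ≤ #s := by
  refine (natDegree_prod_le _ _).trans ?_
  rw [card_eq_sum_ones]
  exact sum_le_sum fun i _ => by compute_degree

theorem coeff_zero_revNodal : (revNodal s v).coeff 0 = 1 := by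
  simp [revNodal, coeff_zero_eq_eval_zero, eval_prod]

variable [DecidableEq ι]

theorem natDegree_revNodal_erase_lt {i : ι} (hi : i ∈ s) :
    (revNodal (s.erase i) v).natDegree < #s :=
  natDegree_revNodal_le.trans_lt (card_erase_lt_of_mem hi)

theorem revNodal_eq_mul_revNodal_erase {i : ι} (hi : i ∈ s) :
    revNodal s v = (1 - C (v i) * X) * revNodal (s.erase i) v :=
  (mul_prod_erase s _ hi).symm

theorem sum_pow_div_prod_sub (hvs : Set.InjOn v s) {m : ℕ} (hm : m < #s) :
    ∑ i ∈ s, v i ^ m / ∏ j ∈ s.erase i, (v i - v j) = if m = #s - 1 then 1 else 0 := by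
  have h := coeff_eq_sum hvs (P := X ^ m) (by rw [degree_X_pow]; exact_mod_cast hm)
  simpa [coeff_X_pow, eq_comm] using h.symm

theorem pow_mul_coeff_revNodal_erase {i : ι} (hi : i ∈ s) (k : ℕ) :
    v i ^ k * (revNodal (s.erase i) v).coeff k
      = ∑ l ∈ range (k + 1), (revNodal s v).coeff (k - l) * v i ^ (k + l) := by
  rw [coeff_eq_sum_of_eq_one_sub_C_mul_X_mul (revNodal_eq_mul_revNodal_erase hi), mul_sum]
  refine sum_congr rfl fun l _ => ?_
  ring

theorem pow_mul_coeff_revNodal_erase_of_le_two_mul {i : ι} (hi : i ∈ s) {k : ℕ} (hks : k < #s)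
    (hsk : #s ≤ 2 * k) :
    v i ^ k * (revNodal (s.erase i) v).coeff k
      = -∑ l ∈ range (#s - k), (revNodal s v).coeff (#s - l) * v i ^ (2 * k - #s + l) := by
  have h := pow_mul_coeff_of_eq_one_sub_C_mul_X_mul
    (revNodal_eq_mul_revNodal_erase (v := v) hi) k (#s - k)
  rw [Nat.add_sub_cancel' hks.le, coeff_eq_zero_of_natDegree_lt (natDegree_revNodal_erase_lt hi),
    zero_sub] at h
  calc v i ^ k * (revNodal (s.erase i) v).coeff k
      = v i ^ (2 * k - #s) * (v i ^ (#s - k) * (revNodal (s.erase i) v).coeff k) := by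
        rw [← mul_assoc, ← pow_add]
        congr 2
        omega
    _ = _ := by
        rw [h, mul_neg, mul_sum]
        refine congrArg _ (sum_congr rfl fun l _ => ?_)
        ring

theorem sum_pow_mul_coeff_revNodal_erase_div (hvs : Set.InjOn v s) {k : ℕ} (hks : k < #s) :
    ∑ i ∈ s, v i ^ k * (revNodal (s.erase i) v).coeff k / ∏ j ∈ s.erase i, (v i - v j)
      = if 2 * k + 1 = #s then 1 else 0 := by
  rcases lt_or_ge (2 * k) #s with hlt | hge
  · rw [sum_congr rfl fun i hi => by rw [pow_mul_coeff_revNodal_erase hi]]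
    simp_rw [sum_div, mul_div_assoc]
    rw [sum_comm]
    simp_rw [← mul_sum]
    rw [sum_congr rfl fun l hl => by
      rw [sum_pow_div_prod_sub hvs (by rw [mem_range] at hl; omega)]]
    split_ifs with hodd
    · rw [sum_eq_single k (fun l hl hlk => by rw [mem_range] at hl; rw [if_neg (by omega),
        mul_zero]) (fun hk => absurd (self_mem_range_succ k) hk), if_pos (by omega),
        Nat.sub_self, coeff_zero_revNodal, mul_one]
    · exact sum_eq_zero fun l hl => by rw [mem_range] at hl; rw [if_neg (by omega), mul_zero]
  · rw [sum_congr rfl fun i hi => by rw [pow_mul_coeff_revNodal_erase_of_le_two_mul hi hks hge]]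
    simp_rw [neg_div, sum_neg_distrib, sum_div, mul_div_assoc]
    rw [sum_comm]
    simp_rw [← mul_sum]
    rw [if_neg (by omega), neg_eq_zero]
    exact sum_eq_zero fun l hl => by
      rw [mem_range] at hl
      rw [sum_pow_div_prod_sub hvs (by omega), if_neg (by omega), mul_zero]

theorem prod_one_sub_mul_div_sub_eq_sum {i : ι} (hi : i ∈ s) (a : F) :
    ∏ j ∈ s.erase i, ((1 - a * v i * v j) / (v i - v j))
      = ∑ k ∈ range #s, a ^ k *
          (v i ^ k * (revNodal (s.erase i) v).coeff k / ∏ j ∈ s.erase i, (v i - v j)) := by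
  have heval :
      ∏ j ∈ s.erase i, (1 - a * v i * v j) = (revNodal (s.erase i) v).eval (a * v i) := by
    rw [eval_revNodal]
    exact prod_congr rfl fun j _ => by ring
  rw [prod_div_distrib, heval, eval_eq_sum_range' (natDegree_revNodal_erase_lt hi), sum_div]
  refine sum_congr rfl fun k _ => ?_
  ring

theorem sum_prod_one_sub_mul_div_sub (hvs : Set.InjOn v s) (a : F) :
    ∑ i ∈ s, ∏ j ∈ s.erase i, ((1 - a * v i * v j) / (v i - v j))
      = if Odd #s then a ^ ((#s - 1) / 2) else 0 := by
  rw [sum_congr rfl fun i hi => prod_one_sub_mul_div_sub_eq_sum hi a, sum_comm]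
  simp_rw [← mul_sum]
  rw [sum_congr rfl fun k hk => by
    rw [sum_pow_mul_coeff_revNodal_erase_div hvs (mem_range.mp hk)]]
  exact Finset.sum_range_pow_mul_ite_two_mul_add_one_eq a #s

end Lagrange

theorem shortlist_sum_general {F : Type*} [Field F] (n : ℕ)
    (x : Fin n → F) (hx : Function.Injective x) (a : F) :
    ∑ i, ∏ j ∈ Finset.univ.erase i, ((1 - a * x i * x j) / (x i - x j))
      = if Odd n then a ^ ((n - 1) / 2) else 0 := by
  simpa using Lagrange.sum_prod_one_sub_mul_div_sub (s := univ) hx.injOn a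

/-- A generalization of an IMO 2019 shortlist problem. -/
theorem shortlist_sum {F : Type*} [Field F] (n : ℕ) (hn : 2 ≤ n)
    (x : Fin n → F) (hx : Function.Injective x) (a : F) :
    ∑ i, ∏ j ∈ Finset.univ.erase i, ((1 - a * x i * x j) / (x i - x j))
      = if Odd n then a ^ ((n - 1) / 2) else 0 :=
  shortlist_sum_general n x hx a
end
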